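/- There exists an absolute constant C > 0 such that for all x, y ∈ (0, π/2) and all β ∈ [3/2, 2]: cot(y) · 1_{{y ≥ π/3}} ≤ C [ (cot(x) · cot(y))^β + 1_{{x+y ≥ π/2}} · cot(π − x − y) ]. -/

import Mathlib

open Real Set

/-!
Write `a = cot y` and `b = cot x`. When `y ≥ π/3` we have `a ≤ 1`. If `ab ≥ 1/2`, then
`(ab)^β ≥ 1/4` because `β ≤ 2`. Otherwise `cot (x + y) = (ab - 1)/(a + b) < 0` forces
`x + y > π/2`, and `cot (π - x - y) = (1 - ab)/(a + b) ≥ a/4` because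
`a² + ab < 3/2 < 4(1 - ab)`. So `C = 4` works.
-/

namespace Real

theorem cot_pi_sub (x : ℝ) : cot (π - x) = -cot x := by
  rw [cot_eq_cos_div_sin, cot_eq_cos_div_sin, cos_pi_sub, sin_pi_sub, neg_div]

/-- When `sin (x + y) = 0`, both sides are `0` by the convention `z / 0 = 0`. -/
theorem cot_add {x y : ℝ} (hx : sin x ≠ 0) (hy : sin y ≠ 0) :
    cot (x + y) = (cot x * cot y - 1) / (cot x + cot y) := by
  simp only [cot_eq_cos_div_sin, cos_add, sin_add]
  rw [div_mul_div_comm, div_add_div _ _ hx hy, div_sub_one (mul_ne_zero hx hy),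
    div_div_div_cancel_right₀ (mul_ne_zero hx hy)]
  ring_nf

theorem sin_pos_of_mem_Ioo_pi_div_two {x : ℝ} (hx : x ∈ Ioo 0 (π / 2)) : 0 < sin x :=
  sin_pos_of_mem_Ioo (Ioo_subset_Ioo_right (by linarith [pi_pos]) hx)

theorem cot_pos_of_mem_Ioo {x : ℝ} (hx : x ∈ Ioo 0 (π / 2)) : 0 < cot x := by
  rw [← tan_inv_eq_cot]
  exact inv_pos.2 (tan_pos_of_pos_of_lt_pi_div_two hx.1 hx.2)

theorem cot_nonneg_of_mem_Icc {x : ℝ} (hx : x ∈ Icc 0 (π / 2)) : 0 ≤ cot x := by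
  rw [cot_eq_cos_div_sin]
  exact div_nonneg (cos_nonneg_of_mem_Icc ⟨by linarith [hx.1, pi_pos], hx.2⟩)
    (sin_nonneg_of_nonneg_of_le_pi hx.1 (by linarith [hx.2, pi_pos]))

theorem cot_le_one_of_mem_Icc {x : ℝ} (hx : x ∈ Icc (π / 4) (π / 2)) : cot x ≤ 1 := by
  have hsin : 0 < sin x := sin_pos_of_pos_of_lt_pi (by linarith [hx.1, pi_pos])
    (by linarith [hx.2, pi_pos])
  have hcos : cos x ≤ sin x := by
    rw [← cos_pi_div_two_sub]
    exact cos_le_cos_of_nonneg_of_le_pi (by linarith [hx.2]) (by linarith [hx.2, pi_pos])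
      (by linarith [hx.1])
  rwa [cot_eq_cos_div_sin, div_le_one hsin]

theorem pi_div_two_lt_add_of_cot_mul_cot_lt_one {x y : ℝ} (hx : x ∈ Ioo 0 (π / 2))
    (hy : y ∈ Ioo 0 (π / 2)) (h : cot x * cot y < 1) : π / 2 < x + y := by
  by_contra! hxy
  have hcot : cot (x + y) < 0 := by
    rw [cot_add (sin_pos_of_mem_Ioo_pi_div_two hx).ne' (sin_pos_of_mem_Ioo_pi_div_two hy).ne']
    exact div_neg_of_neg_of_pos (by linarith)
      (add_pos (cot_pos_of_mem_Ioo hx) (cot_pos_of_mem_Ioo hy))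
  exact hcot.not_ge (cot_nonneg_of_mem_Icc ⟨by linarith [hx.1, hy.1], hxy⟩)

end Real

theorem one_le_four_mul_rpow_of_half_le {t β : ℝ} (ht : 1 / 2 ≤ t) (hβ₀ : 0 ≤ β)
    (hβ₂ : β ≤ 2) : 1 ≤ 4 * t ^ β :=
  calc (1 : ℝ) = 4 * (1 / 2) ^ (2 : ℝ) := by norm_num
    _ ≤ 4 * (1 / 2) ^ β := by
      gcongr 4 * ?_
      exact rpow_le_rpow_of_exponent_ge (by norm_num) (by norm_num) hβ₂
    _ ≤ 4 * t ^ β := by gcongr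

theorem cot_le_four_mul_cot_pi_sub_sub {x y : ℝ} (hx : x ∈ Ioo 0 (π / 2))
    (hy : y ∈ Ioo 0 (π / 2)) (hy₁ : cot y ≤ 1) (h : cot x * cot y < 1 / 2) :
    cot y ≤ 4 * cot (π - x - y) := by
  have hx₀ := cot_pos_of_mem_Ioo hx
  have hy₀ := cot_pos_of_mem_Ioo hy
  rw [sub_sub, cot_pi_sub, cot_add (sin_pos_of_mem_Ioo_pi_div_two hx).ne'
    (sin_pos_of_mem_Ioo_pi_div_two hy).ne', ← neg_div, neg_sub, mul_div_assoc',
    le_div_iff₀ (by positivity)]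
  nlinarith

theorem cot_indicator_le :
    ∃ C : ℝ, 0 < C ∧
      ∀ x ∈ Ioo (0 : ℝ) (π / 2), ∀ y ∈ Ioo (0 : ℝ) (π / 2),
        ∀ β ∈ Icc (3 / 2 : ℝ) 2,
          (if π / 3 ≤ y then Real.cot y else 0)
            ≤ C * ((Real.cot x * Real.cot y) ^ β
                + (if π / 2 ≤ x + y then Real.cot (π - x - y) else 0)) := by
  refine ⟨4, by norm_num, ?_⟩
  rintro x hx y hy β ⟨hβ, hβ₂⟩
  have hpow : 0 ≤ (cot x * cot y) ^ β := by
    have := cot_pos_of_mem_Ioo hx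
    have := cot_pos_of_mem_Ioo hy
    positivity
  have hind : 0 ≤ if π / 2 ≤ x + y then cot (π - x - y) else 0 := by
    split_ifs with hxy
    · exact cot_nonneg_of_mem_Icc ⟨by linarith [hx.2, hy.2], by linarith⟩
    · rfl
  by_cases hy₃ : π / 3 ≤ y
  swap
  · rw [if_neg hy₃]
    positivity
  rw [if_pos hy₃]
  have hy₁ : cot y ≤ 1 := cot_le_one_of_mem_Icc ⟨by linarith [pi_pos], hy.2.le⟩
  rcases le_or_gt (1 / 2) (cot x * cot y) with hlarge | hsmall
  · linarith [one_le_four_mul_rpow_of_half_le hlarge (by linarith) hβ₂]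
  · have hxy := pi_div_two_lt_add_of_cot_mul_cot_lt_one hx hy (by linarith)
    rw [if_pos hxy.le]
    linarith [cot_le_four_mul_cot_pi_sub_sub hx hy hy₁ hsmall]
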